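/- arXiv:2308.04985 — 5 statements merged into one kernel-verified Lean document; each statement's English description precedes it below -/
import Mathlib

section
/- If μ ∈ M(ℝ^{2d}) and R is a compact operator on L²(ℝᵈ), then the operator μ⋆R defined weakly by ⟨(μ⋆R)ψ,φ⟩ = ∫⟨π(z)Rπ(z)*ψ,φ⟩dμ(z) is compact. -/
/-!
Writing `g z = π z ∘ R ∘ π z*`, the operator `μ ⋆ R` is the Bochner integral `∫ h • g dν`.
The family `g` is continuous in operator norm: a bounded, strongly continuous family of
operators converges uniformly on compact sets, in particular on the images of the unit ball
under `R` and under `R*` (compact by Schauder's theorem), which controls both factors of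
`g z - g w`. So `h • g` is Bochner integrable, and its integral is compact because the compact
operators form a closed subspace, which contains the averages of its integrable functions.
-/

open ContinuousLinearMap MeasureTheory Filter Metric Set Topology
open scoped InnerProduct

theorem TotallyBounded.image_of_uniform_control {X Y Z : Type*} [PseudoMetricSpace Y]
    [PseudoMetricSpace Z] {f : X → Y} {g : X → Z} {s : Set X} (hg : TotallyBounded (g '' s))
    (hfg : ∀ ε > 0, ∃ δ > 0, ∀ x ∈ s, ∀ y ∈ s, dist (g x) (g y) < δ → dist (f x) (f y) < ε) :
    TotallyBounded (f '' s) := by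
  rw [Metric.totallyBounded_iff]
  intro ε hε
  obtain ⟨δ, hδ, hδε⟩ := hfg ε hε
  obtain ⟨u, hus, hufin, hcover⟩ :=
    Set.exists_subset_image_finite_and.1 (finite_approx_of_totallyBounded hg δ hδ)
  refine ⟨f '' u, hufin.image f, ?_⟩
  rintro _ ⟨x, hx, rfl⟩
  obtain ⟨_, ⟨y, hy, rfl⟩, hxy⟩ := mem_iUnion₂.1 (hcover (mem_image_of_mem g hx))
  exact mem_iUnion₂.2 ⟨f y, mem_image_of_mem f hy, hδε x hx y (hus hy) hxy⟩

section Normed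

variable {𝕜 E F G : Type*} [RCLike 𝕜] [NormedAddCommGroup E] [NormedSpace 𝕜 E]
  [NormedAddCommGroup F] [NormedSpace 𝕜 F] [NormedAddCommGroup G] [NormedSpace 𝕜 G]
  {ι : Type*} {l : Filter ι}

theorem tendstoUniformlyOn_zero_of_norm_le {A : ι → F →L[𝕜] G} {C : ℝ} (hC : ∀ i, ‖A i‖ ≤ C)
    (hA : ∀ y, Tendsto (fun i => A i y) l (𝓝 0)) {S : Set F} (hS : IsCompact S) :
    TendstoUniformlyOn (fun i y => A i y) 0 l S := by
  rw [Metric.tendstoUniformlyOn_iff]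
  intro ε hε
  obtain ⟨δ, hδ, hCδ⟩ := exists_pos_mul_lt (half_pos hε) C
  obtain ⟨t, -, htfin, hcover⟩ := finite_cover_balls_of_compact hS hδ
  have hnet : ∀ᶠ i in l, ∀ y ∈ t, ‖A i y‖ < ε / 2 := htfin.eventually_all.2 fun y _ =>
    (tendsto_zero_iff_norm_tendsto_zero.1 (hA y)).eventually_lt_const (half_pos hε)
  filter_upwards [hnet] with i hi x hx
  obtain ⟨y, hy, hxy⟩ := mem_iUnion₂.1 (hcover hx)
  rw [Pi.zero_apply, dist_zero_left]
  calc ‖A i x‖ ≤ ‖A i (x - y)‖ + ‖A i y‖ := by rw [map_sub]; exact norm_le_norm_sub_add _ _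
    _ ≤ ‖A i‖ * ‖x - y‖ + ‖A i y‖ := by gcongr; exact le_opNorm _ _
    _ ≤ C * δ + ‖A i y‖ := by
        have hC0 : 0 ≤ C := (norm_nonneg _).trans (hC i)
        gcongr
        exacts [hC i, (mem_ball_iff_norm.1 hxy).le]
    _ < ε := by linarith [hi y hy]

theorem tendsto_comp_of_isCompactOperator {A : ι → F →L[𝕜] G} {A₀ : F →L[𝕜] G} {C : ℝ}
    (hC : ∀ i, ‖A i‖ ≤ C) (hA : ∀ y, Tendsto (fun i => A i y) l (𝓝 (A₀ y)))
    {K : E →L[𝕜] F} (hK : IsCompactOperator K) :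
    Tendsto (fun i => A i ∘L K) l (𝓝 (A₀ ∘L K)) := by
  rw [← tendsto_sub_nhds_zero_iff]
  simp_rw [← sub_comp]
  obtain ⟨S, hS, hKS⟩ := hK.image_closedBall_subset_compact 1
  have hunif := Metric.tendstoUniformlyOn_iff.1 <| tendstoUniformlyOn_zero_of_norm_le
    (A := fun i => A i - A₀) (fun i => (norm_sub_le _ _).trans (add_le_add_left (hC i) _))
    (fun y => tendsto_sub_nhds_zero_iff.2 (hA y)) hS
  rw [Metric.tendsto_nhds]
  intro ε hε
  filter_upwards [hunif (ε / 2) (half_pos hε)] with i hi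
  rw [dist_zero_right]
  refine (opNorm_le_of_unit_norm (half_pos hε).le fun x hx => ?_).trans_lt (half_lt_self hε)
  have hKx : K x ∈ S := hKS (mem_image_of_mem K (mem_closedBall_zero_iff.2 hx.le))
  simpa [dist_eq_norm'] using (hi (K x) hKx).le

theorem Continuous.clm_comp_of_isCompactOperator {X : Type*} [TopologicalSpace X]
    {U : X → F →L[𝕜] G} {C : ℝ} (hUC : ∀ x, ‖U x‖ ≤ C) (hU : ∀ y, Continuous fun x => U x y)
    {K : X → E →L[𝕜] F} (hK : Continuous K) (hKc : ∀ x, IsCompactOperator (K x)) :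
    Continuous fun x => U x ∘L K x := by
  refine continuous_iff_continuousAt.2 fun w => ?_
  have hnear : Tendsto (fun x => U x ∘L (K x - K w)) (𝓝 w) (𝓝 0) := by
    refine squeeze_zero_norm (fun x => (opNorm_comp_le _ _).trans
      (mul_le_mul_of_nonneg_right (hUC x) (norm_nonneg _))) ?_
    simpa using ((hK.tendsto w).sub_const (K w)).norm.const_mul C
  have hfar : Tendsto (fun x => U x ∘L K w) (𝓝 w) (𝓝 (U w ∘L K w)) :=
    tendsto_comp_of_isCompactOperator hUC (fun y => (hU y).tendsto w) (hKc w)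
  simpa [ContinuousAt, comp_sub] using hnear.add hfar

end Normed

section Hilbert

variable {𝕜 E F : Type*} [RCLike 𝕜] [NormedAddCommGroup E] [InnerProductSpace 𝕜 E]
  [CompleteSpace E] [NormedAddCommGroup F] [InnerProductSpace 𝕜 F] [CompleteSpace F]

theorem ContinuousLinearMap.norm_adjoint_apply_sq_le (A : E →L[𝕜] F) (v : F) :
    ‖(A†) v‖ ^ 2 ≤ ‖v‖ * ‖A ((A†) v)‖ := by
  rw [apply_norm_sq_eq_inner_adjoint_right, adjoint_adjoint]
  exact (RCLike.re_le_norm _).trans (norm_inner_le_norm _ _)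

/-- Schauder's theorem: by `norm_adjoint_apply_sq_le`, `A†` is uniformly controlled on the unit
ball by the compact operator `A ∘L A†`. -/
theorem IsCompactOperator.adjoint {A : E →L[𝕜] F} (hA : IsCompactOperator A) :
    IsCompactOperator (A†) := by
  refine (isCompactOperator_iff_isCompact_closure_image_closedBall
    (A† : F →ₗ[𝕜] E) one_pos).2 (TotallyBounded.isCompact_of_isClosed ?_ isClosed_closure)
  refine TotallyBounded.closure (TotallyBounded.image_of_uniform_control
    (g := A ∘L A†) ?_ fun ε hε => ⟨ε ^ 2 / 2, by positivity, ?_⟩)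
  · exact ((hA.comp_clm (A†)).isCompact_closure_image_closedBall 1).totallyBounded.subset
      subset_closure
  · intro x hx y hy hxy
    rw [mem_closedBall_zero_iff] at hx hy
    have hxy2 : ‖x - y‖ ≤ 2 := (norm_sub_le x y).trans (by linarith)
    rw [dist_eq_norm, ← map_sub] at hxy ⊢
    refine lt_of_pow_lt_pow_left₀ 2 hε.le ((A.norm_adjoint_apply_sq_le (x - y)).trans_lt ?_)
    calc ‖x - y‖ * ‖A ((A†) (x - y))‖ ≤ 2 * ‖(A ∘L A†) (x - y)‖ :=
          mul_le_mul_of_nonneg_right hxy2 (norm_nonneg _)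
      _ < ε ^ 2 := by linarith

theorem norm_le_one_of_adjoint_comp_self_eq_one {U : E →L[𝕜] F} (hU : U† ∘L U = 1) :
    ‖U‖ ≤ 1 := by
  have h := norm_adjoint_comp_self U
  rw [hU] at h
  have h1 : ‖(1 : E →L[𝕜] E)‖ ≤ 1 := norm_id_le
  nlinarith [norm_nonneg U]

theorem norm_comp_comp_adjoint_le {U : E →L[𝕜] F} (hU : ‖U‖ ≤ 1) (R : E →L[𝕜] E) :
    ‖U ∘L R ∘L U†‖ ≤ ‖R‖ :=
  calc ‖U ∘L R ∘L U†‖ ≤ ‖U‖ * (‖R‖ * ‖U†‖) :=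
        (opNorm_comp_le _ _).trans (by gcongr; exact opNorm_comp_le _ _)
    _ ≤ 1 * (‖R‖ * 1) := by gcongr; rwa [LinearIsometryEquiv.norm_map]
    _ = ‖R‖ := by ring

theorem continuous_conj_of_isCompactOperator {X : Type*} [TopologicalSpace X]
    {U : X → E →L[𝕜] F} {C : ℝ} (hUC : ∀ x, ‖U x‖ ≤ C) (hU : ∀ y, Continuous fun x => U x y)
    {R : E →L[𝕜] E} (hR : IsCompactOperator R) :
    Continuous fun x => U x ∘L R ∘L (U x)† := by
  have hRU : Continuous fun x => R ∘L (U x)† := by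
    have hUR := Continuous.clm_comp_of_isCompactOperator hUC hU continuous_const
      fun _ => hR.adjoint
    refine ((adjoint (𝕜 := 𝕜) (E := E) (F := F)).continuous.comp hUR).congr fun x => ?_
    simp [adjoint_comp]
  exact Continuous.clm_comp_of_isCompactOperator hUC hU hRU fun x => hR.comp_clm _

end Hilbert

section Integral

variable {α 𝕜 E F : Type*} [MeasurableSpace α] {μ : Measure α} [RCLike 𝕜]
  [NormedAddCommGroup E] [NormedSpace 𝕜 E] [NormedAddCommGroup F] [NormedSpace ℝ F]
  [CompleteSpace F]

theorem IsCompactOperator.integral [NormedSpace 𝕜 F] [IsScalarTower ℝ 𝕜 F] [IsFiniteMeasure μ]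
    {f : α → E →L[𝕜] F} (hf : ∀ z, IsCompactOperator (f z)) (hfi : Integrable f μ) :
    IsCompactOperator (∫ z, f z ∂μ : E →L[𝕜] F) := by
  rcases eq_or_ne μ 0 with rfl | hμ
  · rw [integral_zero_measure]
    exact isCompactOperator_zero
  have : NeZero μ := ⟨hμ⟩
  let V := (compactOperator (RingHom.id 𝕜) E F).restrictScalars ℝ
  rw [← measure_smul_average]
  exact V.smul_mem _
    (V.convex.average_mem isClosed_setOfPred_isCompactOperator (ae_of_all _ hf) hfi)

theorem eq_integral_of_inner_eq [InnerProductSpace 𝕜 F] [IsScalarTower ℝ 𝕜 F]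
    {f : α → E →L[𝕜] F} (hfi : Integrable f μ) {T : E →L[𝕜] F}
    (hT : ∀ ψ φ, inner 𝕜 φ (T ψ) = ∫ z, inner 𝕜 φ (f z ψ) ∂μ) : T = ∫ z, f z ∂μ := by
  ext ψ
  refine ext_inner_left 𝕜 fun φ => ?_
  rw [hT, integral_apply hfi, integral_inner (hfi.apply_continuousLinearMap ψ)]

end Integral

variable {H : Type*} [NormedAddCommGroup H] [InnerProductSpace ℂ H] [CompleteSpace H]

/-- The measure `μ` is given in polar form `dμ = h dν` with `|h| = 1` and `ν` finite. -/
theorem measure_op_conv_compact_general {d : ℕ}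
    (π : EuclideanSpace ℝ (Fin (2 * d)) → H →L[ℂ] H)
    (hunit : ∀ z, π z ∘L adjoint (π z) = 1 ∧ adjoint (π z) ∘L π z = 1)
    (hcont : ∀ ψ : H, Continuous fun z => π z ψ)
    (ν : Measure (EuclideanSpace ℝ (Fin (2 * d)))) [IsFiniteMeasure ν]
    (h : EuclideanSpace ℝ (Fin (2 * d)) → ℂ) (hmeas : Measurable h)
    (hmod : ∀ z, ‖h z‖ = 1)
    (R : H →L[ℂ] H) (hR : IsCompactOperator R)
    (T : H →L[ℂ] H)
    (hT : ∀ ψ φ : H, (inner ℂ φ (T ψ) : ℂ) =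
      ∫ z, h z * (inner ℂ φ (π z (R (adjoint (π z) ψ))) : ℂ) ∂ν) :
    IsCompactOperator T := by
  have hπ z : ‖π z‖ ≤ 1 := norm_le_one_of_adjoint_comp_self_eq_one (hunit z).2
  set g := fun z => π z ∘L R ∘L adjoint (π z)
  have hg : Continuous g := continuous_conj_of_isCompactOperator hπ hcont hR
  have hfi : Integrable (fun z => h z • g z) ν :=
    .of_bound (hmeas.stronglyMeasurable.smul hg.stronglyMeasurable).aestronglyMeasurable ‖R‖
      (ae_of_all _ fun z => by
        rw [norm_smul, hmod, one_mul]
        exact norm_comp_comp_adjoint_le (hπ z) R)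
  rw [eq_integral_of_inner_eq (T := T) hfi fun ψ φ => by simp [hT, g, inner_smul_right]]
  exact IsCompactOperator.integral (fun z => ((hR.comp_clm _).clm_comp _).smul (h z)) hfi

/-- If `μ` is a bounded complex measure on `ℝ^{2d}` (polar form `dμ = h dν`, `|h| = 1`,
`ν` finite) and `R` is a compact operator, then the weakly defined operator `μ ⋆ R` is
compact. -/
theorem measure_op_conv_compact {d : ℕ}
    (π : EuclideanSpace ℝ (Fin (2 * d)) → H →L[ℂ] H)
    (hunit : ∀ z, π z ∘L adjoint (π z) = 1 ∧ adjoint (π z) ∘L π z = 1)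
    (hmul : ∀ z w, ∃ c : ℂ, ‖c‖ = 1 ∧ π z ∘L π w = c • π (z + w))
    (hcont : ∀ ψ : H, Continuous fun z => π z ψ)
    (hcont' : ∀ ψ : H, Continuous fun z => adjoint (π z) ψ)
    (ν : Measure (EuclideanSpace ℝ (Fin (2 * d)))) [IsFiniteMeasure ν]
    (h : EuclideanSpace ℝ (Fin (2 * d)) → ℂ) (hmeas : Measurable h)
    (hmod : ∀ z, ‖h z‖ = 1)
    (R : H →L[ℂ] H) (hR : IsCompactOperator R)
    (T : H →L[ℂ] H)
    (hT : ∀ ψ φ : H, (inner ℂ φ (T ψ) : ℂ) =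
      ∫ z, h z * (inner ℂ φ (π z (R (adjoint (π z) ψ))) : ℂ) ∂ν) :
    IsCompactOperator T :=
  measure_op_conv_compact_general π hunit hcont ν h hmeas hmod R hR T hT
end

section
/- For a compact operator S on L²(ℝᵈ) and ψ, φ ∈ L²(ℝᵈ), the function z ↦ ⟨π(z)Sπ(z)*ψ, φ⟩ belongs to C₀(ℝ^{2d}), i.e., is continuous and vanishes at infinity. -/
/-!
Write the coefficient as `⟨π(z)* φ, S π(z)* ψ⟩`. The vectors `S π(z)* ψ` stay in the compact set
`closure (S '' closedBall 0 ‖ψ‖)`, while the functionals `⟨π(z)* φ, ·⟩` are uniformly bounded, hence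
equicontinuous, and tend to `0` pointwise at infinity. By Ascoli this convergence is uniform on
compact sets, so the coefficient tends to `0`.
-/

open ContinuousLinearMap Filter Topology

theorem Equicontinuous.tendstoUniformlyOn_of_tendsto {ι X α : Type*} [TopologicalSpace X]
    [UniformSpace α] {F : ι → X → α} {f : X → α} {l : Filter ι} {K : Set X}
    (hF : Equicontinuous F) (hK : IsCompact K) (h : ∀ x, Tendsto (F · x) l (𝓝 (f x))) :
    TendstoUniformlyOn F f l K := by
  have hunif := (EquicontinuousOn.tendsto_uniformOnFun_iff_pi' (𝔖 := {K}) (by simpa)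
    (by simpa using hF.equicontinuousOn K) l f).2 (tendsto_pi_nhds.2 fun x => h x)
  exact UniformOnFun.tendsto_iff_tendstoUniformlyOn.1 hunif K rfl

theorem Equicontinuous.tendsto_apply_of_mem_isCompact {ι X α : Type*} [TopologicalSpace X]
    [UniformSpace α] {F : ι → X → α} {a : α} {l : Filter ι} {K : Set X} {g : ι → X}
    (hF : Equicontinuous F) (hK : IsCompact K) (h : ∀ x, Tendsto (F · x) l (𝓝 a))
    (hg : ∀ i, g i ∈ K) : Tendsto (fun i => F i (g i)) l (𝓝 a) := by
  rw [nhds_eq_comap_uniformity, tendsto_comap_iff]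
  intro u hu
  exact ((hF.tendstoUniformlyOn_of_tendsto (f := fun _ => a) hK h) u hu).mono
    fun i hi => hi (g i) (hg i)

noncomputable section

variable {H : Type*} [NormedAddCommGroup H] [InnerProductSpace ℂ H] [CompleteSpace H]

theorem matrix_coefficient_conjugation_C0_general {d : ℕ}
    (π : EuclideanSpace ℝ (Fin (2 * d)) → H →L[ℂ] H)
    (hunit : ∀ z, π z ∘L adjoint (π z) = 1 ∧ adjoint (π z) ∘L π z = 1)
    (hcont' : ∀ ψ : H, Continuous fun z => adjoint (π z) ψ)
    (hC0 : ∀ ψ φ : H, Tendsto (fun z => (inner ℂ (π z φ) ψ : ℂ))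
      (cocompact (EuclideanSpace ℝ (Fin (2 * d)))) (𝓝 0))
    (S : H →L[ℂ] H) (hS : IsCompactOperator S) (ψ φ : H) :
    Continuous (fun z => (inner ℂ φ (π z (S (adjoint (π z) ψ))) : ℂ)) ∧
    Tendsto (fun z => (inner ℂ φ (π z (S (adjoint (π z) ψ))) : ℂ))
      (cocompact (EuclideanSpace ℝ (Fin (2 * d)))) (𝓝 0) := by
  have hiso : ∀ z (v : H), ‖adjoint (π z) v‖ = ‖v‖ := fun z =>
    (norm_map_iff_adjoint_comp_self _).2 (by rw [adjoint_adjoint]; exact (hunit z).1)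
  have hcoeff (z) : (inner ℂ φ (π z (S (adjoint (π z) ψ))) : ℂ) =
      inner ℂ (adjoint (π z) φ) (S (adjoint (π z) ψ)) :=
    (adjoint_inner_left _ _ _).symm
  simp only [hcoeff]
  refine ⟨(hcont' φ).inner (S.continuous.comp (hcont' ψ)), ?_⟩
  have hbound : ∃ C, ∀ z, ‖innerSL ℂ (adjoint (π z) φ)‖ ≤ C :=
    ⟨‖φ‖, fun z => by rw [innerSL_apply_norm, hiso]⟩
  have hequi : Equicontinuous fun z => ⇑(innerSL ℂ (adjoint (π z) φ)) :=
    ((NormedSpace.equicontinuous_TFAE fun z => innerSL ℂ (adjoint (π z) φ)).out 5 1).1 hbound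
  have hpointwise (y : H) :
      Tendsto (fun z => innerSL ℂ (adjoint (π z) φ) y) (cocompact _) (𝓝 0) := by
    simpa only [innerSL_apply_apply, adjoint_inner_left, ← inner_conj_symm φ, starRingEnd_apply,
      star_zero] using (hC0 φ y).star
  exact hequi.tendsto_apply_of_mem_isCompact (hS.isCompact_closure_image_closedBall ‖ψ‖)
    hpointwise fun z => subset_closure ⟨_, by simp [hiso], rfl⟩

/-- For a compact operator `S` and `ψ, φ ∈ L²(ℝᵈ)`, the function
`z ↦ ⟨π(z)Sπ(z)*ψ, φ⟩` is continuous and vanishes at infinity, i.e. lies in `C₀(ℝ^{2d})`.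
The hypotheses record that `π` is a strongly continuous family of unitaries whose matrix
coefficients (the STFTs) vanish at infinity. -/
theorem matrix_coefficient_conjugation_C0 {d : ℕ}
    (π : EuclideanSpace ℝ (Fin (2 * d)) → H →L[ℂ] H)
    (hunit : ∀ z, π z ∘L adjoint (π z) = 1 ∧ adjoint (π z) ∘L π z = 1)
    (hmul : ∀ z w, ∃ c : ℂ, ‖c‖ = 1 ∧ π z ∘L π w = c • π (z + w))
    (hcont : ∀ ψ : H, Continuous fun z => π z ψ)
    (hcont' : ∀ ψ : H, Continuous fun z => adjoint (π z) ψ)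
    (hC0 : ∀ ψ φ : H, Tendsto (fun z => (inner ℂ (π z φ) ψ : ℂ))
      (cocompact (EuclideanSpace ℝ (Fin (2 * d)))) (𝓝 0))
    (S : H →L[ℂ] H) (hS : IsCompactOperator S) (ψ φ : H) :
    Continuous (fun z => (inner ℂ φ (π z (S (adjoint (π z) ψ))) : ℂ)) ∧
    Tendsto (fun z => (inner ℂ φ (π z (S (adjoint (π z) ψ))) : ℂ))
      (cocompact (EuclideanSpace ℝ (Fin (2 * d)))) (𝓝 0) :=
  matrix_coefficient_conjugation_C0_general π hunit hcont' hC0 S hS ψ φ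

end
end

section
/- Let S be a positive trace-class operator and Λ a lattice such that Σ_{λ∈Λ} Q_S(ψ)(λ) = ‖ψ‖² for all ψ ∈ L²(ℝᵈ), where Q_S(ψ)(λ) = ⟨Sπ(λ)*ψ, π(λ)*ψ⟩. Then for any trace-class operator T, Σ_{λ∈Λ} tr(T π(λ)Sπ(λ)*) = tr(T). -/
open ContinuousLinearMap

/-!
Write `S = R* R`. The frame condition then says that the operators `B_λ = R π(λ)*` satisfy
`Σ_λ ‖B_λ ψ‖² = ‖ψ‖²`, so by polarization `Σ_λ ⟨B_λ x, B_λ y⟩ = ⟨x, y⟩`. Since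
`|⟨B_λ η, B_λ ξ⟩| ≤ (‖B_λ η‖² + ‖B_λ ξ‖²) / 2` and the right side sums over `λ` to `1` for unit
vectors, the double series over `λ` and the singular values `tₙ` converges absolutely, and the two
summations may be interchanged.
-/

noncomputable section

variable {H : Type*} [NormedAddCommGroup H] [InnerProductSpace ℂ H] [CompleteSpace H]

theorem tsum_comm_of_norm_le {α β G : Type*} [NormedAddCommGroup G] [CompleteSpace G]
    {f : α → β → G} {g : α → β → ℝ} (hg0 : 0 ≤ g) (hfg : ∀ a b, ‖f a b‖ ≤ g a b)
    (hg : ∀ b, Summable (g · b)) (hgs : Summable fun b => ∑' a, g a b) :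
    ∑' a, ∑' b, f a b = ∑' b, ∑' a, f a b := by
  have hg' : Summable fun p : β × α => g p.2 p.1 :=
    (summable_prod_of_nonneg fun p => hg0 p.2 p.1).mpr ⟨hg, hgs⟩
  have hf : Summable (Function.uncurry f) :=
    ((Equiv.prodComm α β).summable_iff.mpr hg').of_norm_bounded fun p => hfg p.1 p.2
  exact (hf.tsum_comm).symm

theorem ContinuousLinearMap.IsPositive.exists_inner_map_eq {S : H →L[ℂ] H} (hS : S.IsPositive) :
    ∃ R : H →L[ℂ] H, ∀ u v, inner ℂ u (S v) = inner ℂ (R u) (R v) := by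
  obtain ⟨R, rfl⟩ := CStarAlgebra.nonneg_iff_eq_star_mul_self.mp ((nonneg_iff_isPositive S).mpr hS)
  exact ⟨R, fun u v => by rw [star_eq_adjoint]; exact adjoint_inner_right R u (R v)⟩

section ParsevalFamily

variable {𝕜 E F ι : Type*} [RCLike 𝕜] [NormedAddCommGroup E] [InnerProductSpace 𝕜 E]
  [NormedAddCommGroup F] [InnerProductSpace 𝕜 F] {B : ι → E →ₗ[𝕜] F}

theorem hasSum_norm_sq_of_tsum_eq (hB : ∀ x, ∑' i, (‖B i x‖ : 𝕜) ^ 2 = (‖x‖ : 𝕜) ^ 2) (x : E) :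
    HasSum (fun i => ‖B i x‖ ^ 2) (‖x‖ ^ 2) := by
  have hx : ∑' i, ((‖B i x‖ ^ 2 : ℝ) : 𝕜) = ((‖x‖ ^ 2 : ℝ) : 𝕜) := by
    push_cast
    exact hB x
  by_cases hsum : Summable fun i => ‖B i x‖ ^ 2
  · rw [← RCLike.ofReal_tsum] at hx
    exact RCLike.ofReal_injective hx ▸ hsum.hasSum
  · rw [tsum_eq_zero_of_not_summable (mt (RCLike.summable_ofReal 𝕜).mp hsum), eq_comm,
      RCLike.ofReal_eq_zero, sq_eq_zero_iff, norm_eq_zero] at hx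
    simp [hx] at hsum

theorem hasSum_inner_of_hasSum_norm_sq (hB : ∀ x, HasSum (fun i => ‖B i x‖ ^ 2) (‖x‖ ^ 2))
    (x y : E) : HasSum (fun i => inner 𝕜 (B i x) (B i y)) (inner 𝕜 x y) := by
  have hB' (z : E) : HasSum (fun i => (‖B i z‖ : 𝕜) ^ 2) ((‖z‖ : 𝕜) ^ 2) := by
    exact_mod_cast (RCLike.hasSum_ofReal 𝕜).mpr (hB z)
  simp only [inner_eq_sum_norm_sq_div_four (𝕜 := 𝕜) x y, inner_eq_sum_norm_sq_div_four (B _ x),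
    ← map_add, ← map_sub, ← map_smul]
  exact (((hB' _).sub (hB' _)).add (((hB' _).sub (hB' _)).mul_right _)).div_const 4

theorem tsum_tsum_mul_inner_eq_of_hasSum_norm_sq
    (hB : ∀ x, HasSum (fun i => ‖B i x‖ ^ 2) (‖x‖ ^ 2)) {κ : Type*} {t : κ → ℝ}
    (ht0 : ∀ n, 0 ≤ t n) (ht : Summable t) {ξ η : κ → E} (hξ : ∀ n, ‖ξ n‖ = 1)
    (hη : ∀ n, ‖η n‖ = 1) :
    ∑' i, ∑' n, (t n : 𝕜) * inner 𝕜 (B i (η n)) (B i (ξ n)) =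
      ∑' n, (t n : 𝕜) * inner 𝕜 (η n) (ξ n) := by
  set g : ι → κ → ℝ := fun i n => t n * ((‖B i (η n)‖ ^ 2 + ‖B i (ξ n)‖ ^ 2) / 2)
  have hg (n : κ) : HasSum (g · n) (t n) := by
    simpa [hξ, hη] using (((hB (η n)).add (hB (ξ n))).div_const 2).mul_left (t n)
  rw [tsum_comm_of_norm_le (g := g) (fun i n => mul_nonneg (ht0 n) (by positivity)) ?_
    (fun n => (hg n).summable) (ht.congr fun n => (hg n).tsum_eq.symm)]
  · exact tsum_congr fun n => by
      rw [tsum_mul_left, (hasSum_inner_of_hasSum_norm_sq hB (η n) (ξ n)).tsum_eq]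
  · intro i n
    rw [norm_mul, RCLike.norm_ofReal, abs_of_nonneg (ht0 n)]
    refine mul_le_mul_of_nonneg_left ((norm_inner_le_norm _ _).trans ?_) (ht0 n)
    nlinarith [sq_nonneg (‖B i (η n)‖ - ‖B i (ξ n)‖)]

end ParsevalFamily

theorem sum_op_conv_eq_trace_general {d : ℕ}
    (Λ : Submodule ℤ (EuclideanSpace ℝ (Fin (2 * d))))
    (π : EuclideanSpace ℝ (Fin (2 * d)) → H →L[ℂ] H)
    (S : H →L[ℂ] H) (hSpos : S.IsPositive)
    (hframe : ∀ ψ : H,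
      ∑' lam : Λ, (inner ℂ (adjoint (π (lam : EuclideanSpace ℝ (Fin (2 * d)))) ψ)
          (S (adjoint (π (lam : EuclideanSpace ℝ (Fin (2 * d)))) ψ)) : ℂ)
        = (‖ψ‖ ^ 2 : ℂ))
    (t : ℕ → ℝ) (ht0 : ∀ n, 0 ≤ t n) (ht : Summable t)
    (ξ η : ℕ → H) (hξ : Orthonormal ℂ ξ) (hη : Orthonormal ℂ η) :
    ∑' lam : Λ, ∑' n, (t n : ℂ) *
        (inner ℂ (η n) (π (lam : EuclideanSpace ℝ (Fin (2 * d)))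
          (S (adjoint (π (lam : EuclideanSpace ℝ (Fin (2 * d)))) (ξ n)))) : ℂ)
      = ∑' n, (t n : ℂ) * (inner ℂ (η n) (ξ n) : ℂ) := by
  obtain ⟨R, hR⟩ := hSpos.exists_inner_map_eq
  let B : Λ → H →ₗ[ℂ] H := fun lam => R ∘L adjoint (π lam)
  have hB (lam : Λ) (x y : H) :
      inner ℂ (adjoint (π lam) x) (S (adjoint (π lam) y)) = inner ℂ (B lam x) (B lam y) :=
    hR _ _
  have hparseval : ∀ x, HasSum (fun lam => ‖B lam x‖ ^ 2) (‖x‖ ^ 2) :=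
    hasSum_norm_sq_of_tsum_eq fun x => by
      have := hframe x
      simp only [hB, inner_self_eq_norm_sq_to_K] at this
      exact this
  simp only [← adjoint_inner_left, hB]
  exact tsum_tsum_mul_inner_eq_of_hasSum_norm_sq hparseval ht0 ht hξ.1 hη.1

/-- If `S` is a positive trace-class operator with `Σ_{λ∈Λ} Q_S(ψ)(λ) = ‖ψ‖²` for all `ψ`
(`Q_S(ψ)(λ) = ⟨Sπ(λ)*ψ, π(λ)*ψ⟩`), then for any trace-class `T`, expanded in its singular
value decomposition `T = Σₙ tₙ(ξₙ⊗ηₙ)`, one has `Σ_{λ∈Λ} tr(T π(λ)Sπ(λ)*) = tr(T)`,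
where `tr(T π(λ)Sπ(λ)*) = Σₙ tₙ ⟨π(λ)Sπ(λ)*ξₙ, ηₙ⟩`. -/
theorem sum_op_conv_eq_trace {d : ℕ}
    (Λ : Submodule ℤ (EuclideanSpace ℝ (Fin (2 * d))))
    [DiscreteTopology Λ] [IsZLattice ℝ Λ]
    (π : EuclideanSpace ℝ (Fin (2 * d)) → H →L[ℂ] H)
    (hunit : ∀ z, π z ∘L adjoint (π z) = 1 ∧ adjoint (π z) ∘L π z = 1)
    (hmul : ∀ z w, ∃ c : ℂ, ‖c‖ = 1 ∧ π z ∘L π w = c • π (z + w))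
    (S : H →L[ℂ] H) (hSpos : S.IsPositive)
    (b : HilbertBasis ℕ ℂ H) (hStc : Summable fun i => ((inner ℂ (b i) (S (b i)) : ℂ)).re)
    (hframe : ∀ ψ : H,
      ∑' lam : Λ, (inner ℂ (adjoint (π (lam : EuclideanSpace ℝ (Fin (2 * d)))) ψ)
          (S (adjoint (π (lam : EuclideanSpace ℝ (Fin (2 * d)))) ψ)) : ℂ)
        = (‖ψ‖ ^ 2 : ℂ))
    (t : ℕ → ℝ) (ht0 : ∀ n, 0 ≤ t n) (ht : Summable t)
    (ξ η : ℕ → H) (hξ : Orthonormal ℂ ξ) (hη : Orthonormal ℂ η) :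
    ∑' lam : Λ, ∑' n, (t n : ℂ) *
        (inner ℂ (η n) (π (lam : EuclideanSpace ℝ (Fin (2 * d)))
          (S (adjoint (π (lam : EuclideanSpace ℝ (Fin (2 * d)))) (ξ n)))) : ℂ)
      = ∑' n, (t n : ℂ) * (inner ℂ (η n) (ξ n) : ℂ) :=
  sum_op_conv_eq_trace_general Λ π S hSpos hframe t ht0 ht ξ η hξ hη

end
end

section
/- Let G be a positive trace-class operator on a Hilbert space whose eigenvalues λₖ (with multiplicity) all satisfy 0 ≤ λₖ ≤ 1, and fix δ ∈ (0,1). Then |#{k : λₖ > 1−δ} − tr(G)| ≤ max{1/δ, 1/(1−δ)} · tr(G − G²). -/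
/-!
Write `#{k : λₖ > 1 - δ} - Σₖ λₖ = Σₖ (1[λₖ > 1 - δ] - λₖ)` and bound the terms one at a time:
above the threshold `1 - λ ≤ λ (1 - λ) / (1 - δ)` because `λ / (1 - δ) ≥ 1`, below it
`λ ≤ λ (1 - λ) / δ` because `(1 - λ) / δ ≥ 1`.
-/

noncomputable section

variable {H : Type*} [NormedAddCommGroup H] [InnerProductSpace ℂ H] [CompleteSpace H]

open Set

theorem abs_indicator_Ioi_sub_le {δ t : ℝ} (hδ : δ ∈ Ioo 0 1) (ht : t ∈ Icc 0 1) :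
    |(Ioi (1 - δ)).indicator 1 t - t| ≤ max (1 / δ) (1 / (1 - δ)) * (t - t ^ 2) := by
  obtain ⟨hδ0, hδ1⟩ := hδ
  obtain ⟨ht0, ht1⟩ := ht
  have hvar : 0 ≤ t - t ^ 2 := by nlinarith
  by_cases hlarge : 1 - δ < t
  · rw [indicator_of_mem (show t ∈ Ioi (1 - δ) from hlarge), Pi.one_apply,
      abs_of_nonneg (by linarith)]
    calc 1 - t ≤ t / (1 - δ) * (1 - t) :=
          le_mul_of_one_le_left (by linarith) ((one_le_div (by linarith)).2 hlarge.le)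
      _ = 1 / (1 - δ) * (t - t ^ 2) := by ring
      _ ≤ _ := mul_le_mul_of_nonneg_right (le_max_right _ _) hvar
  · rw [indicator_of_notMem (show t ∉ Ioi (1 - δ) from hlarge), zero_sub, abs_neg,
      abs_of_nonneg ht0]
    calc t ≤ (1 - t) / δ * t :=
          le_mul_of_one_le_left ht0 ((one_le_div hδ0).2 (by linarith [not_lt.1 hlarge]))
      _ = 1 / δ * (t - t ^ 2) := by ring
      _ ≤ _ := mul_le_mul_of_nonneg_right (le_max_left _ _) hvar

-- For infinite `s` both sides are junk `0`.
theorem tsum_indicator_one {ι : Type*} (s : Set ι) :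
    ∑' i, s.indicator (1 : ι → ℝ) i = s.ncard := by
  simp only [← tsum_subtype, Pi.one_apply, tsum_const, Nat.card_coe_set_eq, nsmul_one]

theorem abs_ncard_sub_tsum_le {ι : Type*} {s : Set ι} {f g : ι → ℝ} (hf : Summable f)
    (hg : Summable g) (hfg : ∀ i, |s.indicator 1 i - f i| ≤ g i) :
    |(s.ncard : ℝ) - ∑' i, f i| ≤ ∑' i, g i := by
  have hdiff : Summable fun i => s.indicator 1 i - f i := hg.of_norm_bounded hfg
  have hind : Summable (s.indicator (1 : ι → ℝ)) := by simpa using hdiff.add hf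
  calc |(s.ncard : ℝ) - ∑' i, f i| = ‖∑' i, (s.indicator 1 i - f i)‖ := by
        rw [hind.tsum_sub hf, tsum_indicator_one, Real.norm_eq_abs]
    _ ≤ ∑' i, g i := tsum_of_norm_bounded hg.hasSum hfg

theorem summable_sub_sq_of_mem_Icc {ι : Type*} {f : ι → ℝ} (hf : Summable f)
    (hf01 : ∀ i, f i ∈ Icc 0 1) : Summable fun i => f i - f i ^ 2 :=
  hf.of_nonneg_of_le (fun i => by nlinarith [(hf01 i).1, (hf01 i).2])
    (fun i => by nlinarith [sq_nonneg (f i)])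

theorem eigenvalue_counting_estimate_general
    (lam : ℕ → ℝ) (hlam : ∀ k, 0 ≤ lam k ∧ lam k ≤ 1) (hsum : Summable lam)
    (δ : ℝ) (hδ : δ ∈ Set.Ioo (0 : ℝ) 1) :
    |(({k | 1 - δ < lam k}.ncard : ℝ)) - ∑' k, lam k|
      ≤ max (1 / δ) (1 / (1 - δ)) * ∑' k, (lam k - lam k ^ 2) := by
  rw [← tsum_mul_left]
  exact abs_ncard_sub_tsum_le hsum ((summable_sub_sq_of_mem_Icc hsum hlam).mul_left _)
    fun k => abs_indicator_Ioi_sub_le hδ (hlam k)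

/-- Let `G` be a positive trace-class operator, with eigendecomposition
`G = Σₖ λₖ (hₖ ⊗ hₖ)` for an orthonormal family `(hₖ)` and summable eigenvalues
`0 ≤ λₖ ≤ 1`, and fix `δ ∈ (0,1)`. Then
`|#{k : λₖ > 1−δ} − tr(G)| ≤ max{1/δ, 1/(1−δ)} · tr(G − G²)`, where `tr G = Σₖ λₖ` and
`tr(G − G²) = Σₖ (λₖ − λₖ²)`. -/
theorem eigenvalue_counting_estimate
    (G : H →L[ℂ] H) (h : ℕ → H) (hh : Orthonormal ℂ h)
    (lam : ℕ → ℝ) (hlam : ∀ k, 0 ≤ lam k ∧ lam k ≤ 1) (hsum : Summable lam)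
    (hG : HasSum (fun k => lam k • ((innerSL ℂ (h k)).smulRight (h k))) G)
    (δ : ℝ) (hδ : δ ∈ Set.Ioo (0 : ℝ) 1) :
    |(({k | 1 - δ < lam k}.ncard : ℝ)) - ∑' k, lam k|
      ≤ max (1 / δ) (1 / (1 - δ)) * ∑' k, (lam k - lam k ^ 2) :=
  eigenvalue_counting_estimate_general lam hlam hsum δ hδ

end
end

section
/- Let S be a positive trace-class operator and Λ a lattice such that A‖ψ‖² ≤ Σ_{λ∈Λ} Q_S(ψ)(λ) ≤ B‖ψ‖² for all ψ ∈ L²(ℝᵈ). Let c ∈ ℓ¹(Λ) be non-negative and μ_c = Σ_{λ∈Λ} c(λ)δ_λ. Then the operator μ̌_c ⋆ S satisfies (A Σ_λ c(λ))‖ψ‖² ≤ Σ_{λ∈Λ} Q_{μ̌_c⋆S}(ψ)(λ) ≤ (B Σ_λ c(λ))‖ψ‖², i.e., (μ̌_c⋆S, Λ) is a mixed-state Gabor frame with frame bounds A Σc, B Σc. -/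
/-!
Covariance `π(λ)π(−λ') ∼ π(λ − λ')` up to a unimodular phase, which cancels in the quadratic
form, gives `Q_{μ̌_c ⋆ S}(ψ)(λ) = Σ_{λ'} c(λ') Q_S(ψ)(λ − λ')`. Summing over `λ ∈ Λ` and
exchanging the (non-negative) double sum, each translate of `Q_S(ψ)` has the same total, so
`Σ_λ Q_{μ̌_c ⋆ S}(ψ)(λ) = (Σ c) · Σ_λ Q_S(ψ)(λ)` and the frame bounds scale by `Σ c`.
-/

open ContinuousLinearMap

noncomputable section

variable {H : Type*} [NormedAddCommGroup H] [InnerProductSpace ℂ H] [CompleteSpace H]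

/-- The Cohen class distribution `Q_S(ψ)(z) = ⟨Sπ(z)*ψ, π(z)*ψ⟩`. -/
def Qs {d : ℕ} (π : EuclideanSpace ℝ (Fin (2 * d)) → H →L[ℂ] H) (S : H →L[ℂ] H)
    (ψ : H) (z : EuclideanSpace ℝ (Fin (2 * d))) : ℝ :=
  ((inner ℂ (adjoint (π z) ψ) (S (adjoint (π z) ψ)) : ℂ)).re

theorem tsum_tsum_mul_sub_of_nonneg {G : Type*} [AddCommGroup G] {c f : G → ℝ}
    (hc0 : 0 ≤ c) (hf0 : 0 ≤ f) (hc : Summable c) (hf : Summable f) :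
    ∑' x, ∑' y, c y * f (x - y) = (∑' y, c y) * ∑' x, f x := by
  have hshift (y : G) : ∑' x, c y * f (x - y) = c y * ∑' x, f x := by
    rw [tsum_mul_left]
    exact congrArg _ ((Equiv.subRight y).tsum_eq f)
  have hprod : Summable fun p : G × G => c p.1 * f (p.2 - p.1) := by
    refine (summable_prod_of_nonneg fun p => mul_nonneg (hc0 _) (hf0 _)).2 ⟨fun y => ?_, ?_⟩
    · exact ((Equiv.subRight y).summable_iff.2 hf).mul_left (c y)
    · simpa only [hshift] using hc.mul_right _
  rw [Summable.tsum_comm (f := fun y x => c y * f (x - y)) hprod, ← tsum_mul_right]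
  exact tsum_congr hshift

section

variable {d : ℕ} {π : EuclideanSpace ℝ (Fin (2 * d)) → H →L[ℂ] H} {S : H →L[ℂ] H}

theorem ContinuousLinearMap.IsPositive.Qs_nonneg (hS : S.IsPositive) (ψ : H)
    (z : EuclideanSpace ℝ (Fin (2 * d))) : 0 ≤ Qs π S ψ z :=
  hS.re_inner_nonneg_right _

namespace IsSelfAdjoint

theorem ofReal_Qs (hS : IsSelfAdjoint S) (ψ : H) (z : EuclideanSpace ℝ (Fin (2 * d))) :
    (Qs π S ψ z : ℂ) = inner ℂ (adjoint (π z) ψ) (S (adjoint (π z) ψ)) :=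
  hS.isSymmetric.coe_re_inner_self_apply _

theorem inner_adjoint_apply_conj_eq_Qs (hS : IsSelfAdjoint S)
    {z w : EuclideanSpace ℝ (Fin (2 * d))} {u : ℂ} (hu : ‖u‖ = 1)
    (hzw : π z ∘L π w = u • π (z + w)) (ψ : H) :
    inner ℂ (adjoint (π z) ψ) (π w (S (adjoint (π w) (adjoint (π z) ψ)))) =
      Qs π S ψ (z + w) := by
  have hadj : adjoint (π w) (adjoint (π z) ψ) = starRingEnd ℂ u • adjoint (π (z + w)) ψ := by
    rw [← comp_apply, ← adjoint_comp, hzw, LinearIsometryEquiv.map_smulₛₗ, smul_apply]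
  have hu1 : u * starRingEnd ℂ u = 1 := by
    rw [Complex.mul_conj, Complex.normSq_eq_norm_sq, hu, one_pow, Complex.ofReal_one]
  rw [← adjoint_inner_left, hadj, map_smul, inner_smul_left, inner_smul_right,
    Complex.conj_conj, ← mul_assoc, hu1, one_mul, hS.ofReal_Qs]

theorem Qs_eq_tsum_mul_Qs_sub (hS : IsSelfAdjoint S)
    (hmul : ∀ z w, ∃ u : ℂ, ‖u‖ = 1 ∧ π z ∘L π w = u • π (z + w))
    {ι : Type*} (z : ι → EuclideanSpace ℝ (Fin (2 * d))) (c : ι → ℝ) {Sc : H →L[ℂ] H}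
    (hSc : ∀ ψ φ : H, inner ℂ φ (Sc ψ) =
      ∑' i, (c i : ℂ) * inner ℂ φ (π (-z i) (S (adjoint (π (-z i)) ψ))))
    (ψ : H) (w : EuclideanSpace ℝ (Fin (2 * d))) :
    Qs π Sc ψ w = ∑' i, c i * Qs π S ψ (w - z i) := by
  have hterm (i : ι) : inner ℂ (adjoint (π w) ψ) (π (-z i) (S (adjoint (π (-z i))
      (adjoint (π w) ψ)))) = Qs π S ψ (w - z i) := by
    obtain ⟨u, hu, hcomp⟩ := hmul w (-z i)
    rw [hS.inner_adjoint_apply_conj_eq_Qs hu hcomp, sub_eq_add_neg]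
  rw [Qs, hSc]
  simp only [hterm, ← Complex.ofReal_mul, ← Complex.ofReal_tsum, Complex.ofReal_re]

end IsSelfAdjoint

end

theorem frame_bounds_of_measure_conv_general {d : ℕ}
    (Λ : Submodule ℤ (EuclideanSpace ℝ (Fin (2 * d))))
    (π : EuclideanSpace ℝ (Fin (2 * d)) → H →L[ℂ] H)
    (hmul : ∀ z w, ∃ c : ℂ, ‖c‖ = 1 ∧ π z ∘L π w = c • π (z + w))
    (S : H →L[ℂ] H) (hSpos : S.IsPositive)
    (A B : ℝ)
    (hsummable : ∀ ψ : H,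
      Summable fun lam : Λ => Qs π S ψ (lam : EuclideanSpace ℝ (Fin (2 * d))))
    (hframe : ∀ ψ : H,
      A * ‖ψ‖ ^ 2 ≤ ∑' lam : Λ, Qs π S ψ (lam : EuclideanSpace ℝ (Fin (2 * d))) ∧
      ∑' lam : Λ, Qs π S ψ (lam : EuclideanSpace ℝ (Fin (2 * d))) ≤ B * ‖ψ‖ ^ 2)
    (c : Λ → ℝ) (hc0 : ∀ lam, 0 ≤ c lam) (hc : Summable c)
    (Sc : H →L[ℂ] H)
    (hSc : ∀ ψ φ : H, (inner ℂ φ (Sc ψ) : ℂ) =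
      ∑' lam' : Λ, (c lam' : ℂ) *
        (inner ℂ φ (π (-(lam' : EuclideanSpace ℝ (Fin (2 * d))))
          (S (adjoint (π (-(lam' : EuclideanSpace ℝ (Fin (2 * d))))) ψ))) : ℂ)) :
    ∀ ψ : H,
      (A * ∑' lam, c lam) * ‖ψ‖ ^ 2
          ≤ ∑' lam : Λ, Qs π Sc ψ (lam : EuclideanSpace ℝ (Fin (2 * d))) ∧
      ∑' lam : Λ, Qs π Sc ψ (lam : EuclideanSpace ℝ (Fin (2 * d)))
          ≤ (B * ∑' lam, c lam) * ‖ψ‖ ^ 2 := by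
  intro ψ
  have htotal : ∑' lam : Λ, Qs π Sc ψ (lam : EuclideanSpace ℝ (Fin (2 * d))) =
      (∑' lam, c lam) * ∑' lam : Λ, Qs π S ψ (lam : EuclideanSpace ℝ (Fin (2 * d))) := by
    simp only [hSpos.isSelfAdjoint.Qs_eq_tsum_mul_Qs_sub hmul _ c hSc, ← Submodule.coe_sub]
    exact tsum_tsum_mul_sub_of_nonneg hc0 (fun _ => hSpos.Qs_nonneg _ _) hc (hsummable ψ)
  have hcsum : 0 ≤ ∑' lam, c lam := tsum_nonneg hc0
  obtain ⟨hlower, hupper⟩ := hframe ψ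
  rw [htotal, mul_comm A, mul_comm B, mul_assoc, mul_assoc]
  exact ⟨mul_le_mul_of_nonneg_left hlower hcsum, mul_le_mul_of_nonneg_left hupper hcsum⟩

/-- If `(S, Λ)` is a mixed-state Gabor frame with frame bounds `A, B`, `c ∈ ℓ¹(Λ)` is
non-negative, and `μ̌_c ⋆ S = Σ_{λ'∈Λ} c(λ') π(−λ')Sπ(−λ')*`, then `(μ̌_c ⋆ S, Λ)` is a
mixed-state Gabor frame with frame bounds `A Σc` and `B Σc`. -/
theorem frame_bounds_of_measure_conv {d : ℕ}
    (Λ : Submodule ℤ (EuclideanSpace ℝ (Fin (2 * d))))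
    [DiscreteTopology Λ] [IsZLattice ℝ Λ]
    (π : EuclideanSpace ℝ (Fin (2 * d)) → H →L[ℂ] H)
    (hunit : ∀ z, π z ∘L adjoint (π z) = 1 ∧ adjoint (π z) ∘L π z = 1)
    (hmul : ∀ z w, ∃ c : ℂ, ‖c‖ = 1 ∧ π z ∘L π w = c • π (z + w))
    (S : H →L[ℂ] H) (hSpos : S.IsPositive)
    (b : HilbertBasis ℕ ℂ H)
    (hStc : Summable fun i => ((inner ℂ (b i) (S (b i)) : ℂ)).re)
    (A B : ℝ) (hA : 0 < A) (hB : 0 < B)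
    (hsummable : ∀ ψ : H,
      Summable fun lam : Λ => Qs π S ψ (lam : EuclideanSpace ℝ (Fin (2 * d))))
    (hframe : ∀ ψ : H,
      A * ‖ψ‖ ^ 2 ≤ ∑' lam : Λ, Qs π S ψ (lam : EuclideanSpace ℝ (Fin (2 * d))) ∧
      ∑' lam : Λ, Qs π S ψ (lam : EuclideanSpace ℝ (Fin (2 * d))) ≤ B * ‖ψ‖ ^ 2)
    (c : Λ → ℝ) (hc0 : ∀ lam, 0 ≤ c lam) (hc : Summable c)
    (Sc : H →L[ℂ] H)
    (hSc : ∀ ψ φ : H, (inner ℂ φ (Sc ψ) : ℂ) =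
      ∑' lam' : Λ, (c lam' : ℂ) *
        (inner ℂ φ (π (-(lam' : EuclideanSpace ℝ (Fin (2 * d))))
          (S (adjoint (π (-(lam' : EuclideanSpace ℝ (Fin (2 * d))))) ψ))) : ℂ)) :
    ∀ ψ : H,
      (A * ∑' lam, c lam) * ‖ψ‖ ^ 2
          ≤ ∑' lam : Λ, Qs π Sc ψ (lam : EuclideanSpace ℝ (Fin (2 * d))) ∧
      ∑' lam : Λ, Qs π Sc ψ (lam : EuclideanSpace ℝ (Fin (2 * d)))
          ≤ (B * ∑' lam, c lam) * ‖ψ‖ ^ 2 :=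
  frame_bounds_of_measure_conv_general Λ π hmul S hSpos A B hsummable hframe c hc0 hc Sc hSc

end
end
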